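/- arXiv:2105.00238 — 5 statements merged into one kernel-verified Lean document; each statement's English description precedes it below -/
import Mathlib

section
/- The map V(x,y,u,v) = (x - βx(u+qy), y - ay + βx(u+qy), u - bu + ay, v + bu) maps the 3-dimensional simplex S³ = {(x,y,u,v) : x,y,u,v ≥ 0, x+y+u+v = 1} into itself if and only if a, b, β ∈ [0,1] and βq ≤ 1. -/
/-!
Since the four components of `V p` still sum to `1`, invariance of the simplex only asks for
nonnegativity of `V p`. The new susceptible fraction is `x (1 - β (u + q y))`, and on the
simplex `β (u + q y) = β u + (β q) y ≤ u + y ≤ 1` when `β ≤ 1` and `β q ≤ 1`; the other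
components are nonnegative once `a, b ≤ 1`. Conversely, the vertices `(0,1,0,0)` and
`(0,0,1,0)` force `a ≤ 1` and `b ≤ 1`, while letting `x ↓ 0` along the edges
`(x, 0, 1 - x, 0)` and `(x, 1 - x, 0, 0)` forces `β ≤ 1` and `β q ≤ 1`.
-/

/-- The 3-dimensional simplex in ℝ⁴. -/
def Simplex3 : Set (ℝ × ℝ × ℝ × ℝ) :=
  {p | 0 ≤ p.1 ∧ 0 ≤ p.2.1 ∧ 0 ≤ p.2.2.1 ∧ 0 ≤ p.2.2.2 ∧
       p.1 + p.2.1 + p.2.2.1 + p.2.2.2 = 1}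

/-- The discrete-time SEIR operator. -/
def seirV (a b β q : ℝ) (p : ℝ × ℝ × ℝ × ℝ) : ℝ × ℝ × ℝ × ℝ :=
  (p.1 - β * p.1 * (p.2.2.1 + q * p.2.1),
   p.2.1 - a * p.2.1 + β * p.1 * (p.2.2.1 + q * p.2.1),
   p.2.2.1 - b * p.2.2.1 + a * p.2.1,
   p.2.2.2 + b * p.2.2.1)

open Set Filter Topology

lemma le_one_of_forall_mul_one_sub_le {c : ℝ} (h : ∀ x, 0 < x → x < 1 → c * (1 - x) ≤ 1) :
    c ≤ 1 := by
  have hlim : Tendsto (fun x : ℝ => c * (1 - x)) (𝓝[>] 0) (𝓝 c) := by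
    have hcont : Continuous fun x : ℝ => c * (1 - x) := by fun_prop
    simpa using (hcont.tendsto 0).mono_left nhdsWithin_le_nhds
  refine le_of_tendsto hlim ?_
  filter_upwards [Ioo_mem_nhdsGT zero_lt_one] with x hx using h x hx.1 hx.2

section SEIR

variable {a b β q : ℝ}

lemma seirV_sum (p : ℝ × ℝ × ℝ × ℝ) :
    (seirV a b β q p).1 + (seirV a b β q p).2.1 + (seirV a b β q p).2.2.1 +
      (seirV a b β q p).2.2.2 = p.1 + p.2.1 + p.2.2.1 + p.2.2.2 := by
  simp only [seirV]
  ring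

lemma infection_le_one_of_mem_simplex (hβ1 : β ≤ 1) (hβq : β * q ≤ 1)
    {p : ℝ × ℝ × ℝ × ℝ} (hp : p ∈ Simplex3) : β * (p.2.2.1 + q * p.2.1) ≤ 1 := by
  obtain ⟨hx, hy, hu, hv, hsum⟩ := hp
  have hβu : β * p.2.2.1 ≤ p.2.2.1 := mul_le_of_le_one_left hu hβ1
  have hβqy : β * q * p.2.1 ≤ p.2.1 := mul_le_of_le_one_left hy hβq
  linear_combination hβu + hβqy + hx + hv + hsum

theorem mapsTo_seirV_simplex (ha : 0 ≤ a) (ha1 : a ≤ 1) (hb : 0 ≤ b) (hb1 : b ≤ 1)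
    (hβ : 0 ≤ β) (hq : 0 ≤ q) (hβ1 : β ≤ 1) (hβq : β * q ≤ 1) :
    MapsTo (seirV a b β q) Simplex3 Simplex3 := by
  intro p hp
  have hinf := infection_le_one_of_mem_simplex hβ1 hβq hp
  obtain ⟨hx, hy, hu, hv, hsum⟩ := hp
  have hforce : 0 ≤ β * p.1 * (p.2.2.1 + q * p.2.1) := by positivity
  refine ⟨?_, ?_, ?_, ?_, (seirV_sum p).trans hsum⟩ <;> simp only [seirV]
  · nlinarith
  · nlinarith
  · nlinarith
  · positivity

lemma edge_mem_simplex {x : ℝ} (hx : 0 ≤ x) (hx1 : x ≤ 1) :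
    (x, 1 - x, 0, 0) ∈ Simplex3 ∧ (x, 0, 1 - x, 0) ∈ Simplex3 := by
  refine ⟨⟨?_, ?_, ?_, ?_, ?_⟩, ⟨?_, ?_, ?_, ?_, ?_⟩⟩ <;> dsimp only <;> linarith

lemma infection_le_one_of_mapsTo (h : MapsTo (seirV a b β q) Simplex3 Simplex3)
    {p : ℝ × ℝ × ℝ × ℝ} (hp : p ∈ Simplex3) (hx : 0 < p.1) :
    β * (p.2.2.1 + q * p.2.1) ≤ 1 := by
  obtain ⟨hx', -⟩ := h hp
  simp only [seirV] at hx'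
  nlinarith

theorem le_one_of_mapsTo_seirV_simplex (h : MapsTo (seirV a b β q) Simplex3 Simplex3) :
    a ≤ 1 ∧ b ≤ 1 ∧ β ≤ 1 ∧ β * q ≤ 1 := by
  refine ⟨?_, ?_, ?_, ?_⟩
  · obtain ⟨-, hy', -⟩ := h (edge_mem_simplex le_rfl zero_le_one).1
    simp only [seirV] at hy'
    linarith
  · obtain ⟨-, -, hu', -⟩ := h (edge_mem_simplex le_rfl zero_le_one).2
    simp only [seirV] at hu'
    linarith
  · refine le_one_of_forall_mul_one_sub_le fun x hx hx1 => ?_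
    simpa using infection_le_one_of_mapsTo h (edge_mem_simplex hx.le hx1.le).2 hx
  · refine le_one_of_forall_mul_one_sub_le fun x hx hx1 => ?_
    simpa [mul_assoc] using infection_le_one_of_mapsTo h (edge_mem_simplex hx.le hx1.le).1 hx

end SEIR

theorem stmt_0 (a b β q : ℝ) (ha : 0 < a) (hb : 0 < b) (hβ : 0 ≤ β) (hq : 0 ≤ q) :
    (∀ p ∈ Simplex3, seirV a b β q p ∈ Simplex3) ↔
      (a ≤ 1 ∧ b ≤ 1 ∧ β ≤ 1 ∧ β * q ≤ 1) :=
  ⟨le_one_of_mapsTo_seirV_simplex, fun ⟨ha1, hb1, hβ1, hβq⟩ =>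
    mapsTo_seirV_simplex ha.le ha1 hb.le hb1 hβ hq hβ1 hβq⟩
end

section
/- If a, b, β ∈ [0,1] and βq ≤ 1, then for every initial point λ⁰ in the simplex S³, the sequence of iterates Vⁿ(λ⁰) converges (i.e., the operator V is regular). -/
/-!
The simplex is invariant, and on it the susceptible share `x` is nonincreasing while the
removed share `v` is nondecreasing, so both converge by monotonicity. The increments of `v`
are `b u`, hence `u → 0`, and the conservation law `x + y + u + v = 1` then forces `y` to
converge as well.
-/

open Filter Topology

theorem tendsto_succ_sub_self {G : Type*} [AddCommGroup G] [TopologicalSpace G]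
    [IsTopologicalAddGroup G] {f : ℕ → G} {l : G} (h : Tendsto f atTop (𝓝 l)) :
    Tendsto (fun n => f (n + 1) - f n) atTop (𝓝 0) := by
  simpa using (h.comp (tendsto_add_atTop_nat 1)).sub h

section
variable {a b β q : ℝ}

theorem mapsTo_seirV_simplex3 (ha : 0 ≤ a) (ha1 : a ≤ 1) (hb : 0 ≤ b) (hb1 : b ≤ 1)
    (hβ : 0 ≤ β) (hβ1 : β ≤ 1) (hq : 0 ≤ q) (hβq : β * q ≤ 1) :
    Set.MapsTo (seirV a b β q) Simplex3 Simplex3 := by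
  rintro ⟨x, y, u, v⟩ ⟨hx, hy, hu, hv, hs⟩
  have hinfected : 0 ≤ β * x * (u + q * y) := by positivity
  have hrate : β * (u + q * y) ≤ 1 := by
    nlinarith [mul_le_mul_of_nonneg_right hβ1 hu, mul_le_mul_of_nonneg_right hβq hy]
  refine ⟨?_, ?_, ?_, ?_, ?_⟩ <;> simp only [seirV]
  · nlinarith [mul_nonneg hx (sub_nonneg.2 hrate)]
  · nlinarith [mul_nonneg (sub_nonneg.2 ha1) hy]
  · nlinarith [mul_nonneg (sub_nonneg.2 hb1) hu, mul_nonneg ha hy]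
  · nlinarith [mul_nonneg hb hu]
  · linarith

theorem seirV_fst_le (hβ : 0 ≤ β) (hq : 0 ≤ q) {p : ℝ × ℝ × ℝ × ℝ} (hp : p ∈ Simplex3) :
    (seirV a b β q p).1 ≤ p.1 := by
  obtain ⟨hx, hy, hu, -⟩ := hp
  have : 0 ≤ β * p.1 * (p.2.2.1 + q * p.2.1) := by positivity
  simp only [seirV]
  linarith

theorem seirV_snd_snd_snd_sub (p : ℝ × ℝ × ℝ × ℝ) :
    (seirV a b β q p).2.2.2 - p.2.2.2 = b * p.2.2.1 := by
  simp only [seirV]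
  ring

end

/-- Regularity: every trajectory converges. -/
theorem stmt_1 (a b β q : ℝ) (ha : 0 < a) (ha1 : a ≤ 1) (hb : 0 < b) (hb1 : b ≤ 1)
    (hβ : 0 ≤ β) (hβ1 : β ≤ 1) (hq : 0 ≤ q) (hβq : β * q ≤ 1)
    (lam0 : ℝ × ℝ × ℝ × ℝ) (hlam : lam0 ∈ Simplex3) :
    ∃ L : ℝ × ℝ × ℝ × ℝ,
      Filter.Tendsto (fun n => (seirV a b β q)^[n] lam0) Filter.atTop (nhds L) := by
  set orbit : ℕ → ℝ × ℝ × ℝ × ℝ := fun n => (seirV a b β q)^[n] lam0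
  have hmem (n : ℕ) : orbit n ∈ Simplex3 :=
    (mapsTo_seirV_simplex3 ha.le ha1 hb.le hb1 hβ hβ1 hq hβq).iterate n hlam
  have hsucc (n : ℕ) : orbit (n + 1) = seirV a b β q (orbit n) :=
    Function.iterate_succ_apply' _ _ _
  have hv_succ (n : ℕ) : (orbit (n + 1)).2.2.2 - (orbit n).2.2.2 = b * (orbit n).2.2.1 := by
    rw [hsucc]; exact seirV_snd_snd_snd_sub _
  obtain ⟨x, hx⟩ : ∃ x, Tendsto (fun n => (orbit n).1) atTop (𝓝 x) := by
    refine ⟨_, tendsto_atTop_ciInf (antitone_nat_of_succ_le fun n => ?_) ⟨0, ?_⟩⟩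
    · rw [hsucc]; exact seirV_fst_le hβ hq (hmem n)
    · rintro _ ⟨n, rfl⟩; exact (hmem n).1
  obtain ⟨v, hv⟩ : ∃ v, Tendsto (fun n => (orbit n).2.2.2) atTop (𝓝 v) := by
    refine ⟨_, tendsto_atTop_ciSup (monotone_nat_of_le_succ fun n => ?_) ⟨1, ?_⟩⟩
    · have := hv_succ n
      nlinarith [mul_nonneg hb.le (hmem n).2.2.1]
    · rintro _ ⟨n, rfl⟩
      obtain ⟨hx, hy, hu, -, hs⟩ := hmem n
      linarith
  have hu : Tendsto (fun n => (orbit n).2.2.1) atTop (𝓝 0) := by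
    have := (tendsto_succ_sub_self hv).const_mul b⁻¹
    simp only [hv_succ, inv_mul_cancel_left₀ hb.ne', mul_zero] at this
    exact this
  have hy : Tendsto (fun n => (orbit n).2.1) atTop (𝓝 (1 - x - 0 - v)) := by
    refine (((tendsto_const_nhds.sub hx).sub hu).sub hv).congr fun n => ?_
    linarith [(hmem n).2.2.2.2]
  exact ⟨_, hx.prodMk_nhds (hy.prodMk_nhds (hu.prodMk_nhds hv))⟩
end

section
/- The set of fixed points of the SEIR operator V on S³ with a > 0, b > 0, β > 0 is exactly {(x, 0, 0, 1-x) : x ∈ [0,1]}. -/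
/-!
At a fixed point the first coordinate forces the infection flow `β x (u + q y)` to vanish; the
second coordinate then reads `a y = 0` and the third `b u = a y`, so there are no exposed and no
infected individuals. Conversely every point with `y = u = 0` is fixed, and on the simplex such a
point is `(x, 0, 0, 1 - x)`.
-/

theorem seirV_eq_self_iff {a b : ℝ} (β q : ℝ) (ha : a ≠ 0) (hb : b ≠ 0) (p : ℝ × ℝ × ℝ × ℝ) :
    seirV a b β q p = p ↔ p.2.1 = 0 ∧ p.2.2.1 = 0 := by
  obtain ⟨x, y, u, v⟩ := p
  simp only [seirV, Prod.mk.injEq]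
  constructor
  · rintro ⟨hS, hE, hI, -⟩
    have hflow : β * x * (u + q * y) = 0 := by linarith
    have hy : y = 0 := (mul_eq_zero.mp (by linarith : a * y = 0)).resolve_left ha
    have hu : u = 0 := (mul_eq_zero.mp (by linarith : b * u = 0)).resolve_left hb
    exact ⟨hy, hu⟩
  · rintro ⟨rfl, rfl⟩
    simp

theorem mk_zero_zero_mem_simplex3_iff (x v : ℝ) :
    (x, 0, 0, v) ∈ Simplex3 ↔ x ∈ Set.Icc 0 1 ∧ v = 1 - x := by
  simp only [Simplex3, Set.mem_ofPred_eq, Set.mem_Icc, le_refl, true_and, add_zero]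
  constructor
  · rintro ⟨hx, hv, hsum⟩
    exact ⟨⟨hx, by linarith⟩, by linarith⟩
  · rintro ⟨⟨hx0, hx1⟩, rfl⟩
    exact ⟨hx0, by linarith, by ring⟩

theorem stmt_4_general (a b β q : ℝ) (ha : 0 < a) (hb : 0 < b) :
    {p ∈ Simplex3 | seirV a b β q p = p} =
      {p : ℝ × ℝ × ℝ × ℝ | ∃ x ∈ Set.Icc (0:ℝ) 1, p = (x, 0, 0, 1 - x)} := by
  ext ⟨x, y, u, v⟩
  simp only [Set.mem_ofPred_eq, seirV_eq_self_iff β q ha.ne' hb.ne']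
  constructor
  · rintro ⟨hp, rfl, rfl⟩
    obtain ⟨hx, rfl⟩ := (mk_zero_zero_mem_simplex3_iff x v).mp hp
    exact ⟨x, hx, rfl⟩
  · rintro ⟨x, hx, hp⟩
    obtain ⟨rfl, rfl, rfl, rfl⟩ := by simpa only [Prod.mk.injEq] using hp
    exact ⟨(mk_zero_zero_mem_simplex3_iff _ _).mpr ⟨hx, rfl⟩, rfl, rfl⟩

theorem stmt_4 (a b β q : ℝ) (ha : 0 < a) (hb : 0 < b) (hβ : 0 < β) (hq : 0 ≤ q) :
    {p ∈ Simplex3 | seirV a b β q p = p} =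
      {p : ℝ × ℝ × ℝ × ℝ | ∃ x ∈ Set.Icc (0:ℝ) 1, p = (x, 0, 0, 1 - x)} :=
  stmt_4_general a b β q ha hb
end

section
/- The Jacobian matrix of the 3-dimensional SEIR map W at any fixed point (x*, 0, 0) has 1 as an eigenvalue; consequently every fixed point (x*, 0, 0), x* ∈ [0,1], is nonhyperbolic. -/
/-- Jacobian of the 3-dimensional SEIR map W at the fixed point (x*, 0, 0). -/
def seirJacobian (a b β q x : ℝ) : Matrix (Fin 3) (Fin 3) ℝ :=
  !![1, -β * q * x, -β * x;
     0, 1 - a + β * q * x, β * x;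
     0, a, 1 - b]

theorem Matrix.hasEigenvalue_one_of_col_eq_single {n R : Type*} [Fintype n] [DecidableEq n]
    [CommRing R] [Nontrivial R] (A : Matrix n n R) (j : n) (h : A.col j = Pi.single j 1) :
    Module.End.HasEigenvalue (Matrix.toLin' A) 1 := by
  refine Module.End.hasEigenvalue_of_hasEigenvector (x := Pi.single j 1) ⟨?_, ?_⟩
  · rw [Module.End.mem_eigenspace_iff, Matrix.toLin'_apply, Matrix.mulVec_single_one, h, one_smul]
  · exact Pi.single_ne_zero_iff.mpr one_ne_zero

theorem seirJacobian_col_zero (a b β q x : ℝ) :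
    (seirJacobian a b β q x).col 0 = Pi.single 0 1 := by
  ext i
  fin_cases i <;> simp [seirJacobian]

theorem stmt_6_general (a b β q x : ℝ) :
    Module.End.HasEigenvalue (Matrix.toLin' (seirJacobian a b β q x)) 1 ∧
    ∃ μ : ℂ, Module.End.HasEigenvalue
        (Matrix.toLin' ((seirJacobian a b β q x).map Complex.ofReal)) μ ∧
      ‖μ‖ = 1 := by
  have hcol := seirJacobian_col_zero a b β q x
  refine ⟨Matrix.hasEigenvalue_one_of_col_eq_single _ 0 hcol, 1, ?_, norm_one⟩
  refine Matrix.hasEigenvalue_one_of_col_eq_single _ 0 ?_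
  rw [Matrix.col_map, hcol]
  ext i
  by_cases hi : i = 0 <;> simp [hi]

theorem stmt_6 (a b β q x : ℝ) (ha : 0 < a) (ha1 : a ≤ 1) (hb : 0 < b) (hb1 : b ≤ 1)
    (hβ : 0 < β) (hβ1 : β ≤ 1) (hq : 0 ≤ q) (hβq : β * q ≤ 1)
    (hx : x ∈ Set.Icc (0:ℝ) 1) :
    Module.End.HasEigenvalue (Matrix.toLin' (seirJacobian a b β q x)) 1 ∧
    ∃ μ : ℂ, Module.End.HasEigenvalue
        (Matrix.toLin' ((seirJacobian a b β q x).map Complex.ofReal)) μ ∧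
      ‖μ‖ = 1 :=
  stmt_6_general a b β q x
end

section
/- Let μ₂ = 1 - (a + b - qαβ - √D)/2 with D = (b - a + qαβ)² + 4aαβ, where a, b ∈ (0,1], β ∈ (0,1], βq ≤ 1, α ∈ [0,1]. Then |μ₂| = 1 if α = ab/(β(a+bq)), |μ₂| < 1 if α < ab/(β(a+bq)), and |μ₂| > 1 if α > ab/(β(a+bq)). -/
/-!
Write `s = a + b - qαβ` and `c = αβ(a + bq) - ab`. The discriminant is `D = s² + 4c`, so
`μ₂ = 1 - (s - √(s² + 4c))/2` and the sign of `c` decides how `√D` compares with `s`: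
`√D = s`, `√D < s` or `√D > s`. In the first two cases `c ≤ 0` forces `s > 0`, and `s ≤ a + b ≤ 2`
keeps `μ₂` above `-1`.
-/

namespace SEIR

lemma abs_one_sub_half_sub_sqrt_sq {s : ℝ} (hs : 0 ≤ s) :
    |1 - (s - √(s ^ 2)) / 2| = 1 := by
  rw [Real.sqrt_sq hs]
  norm_num

lemma abs_one_sub_half_sub_sqrt_lt_one {s c : ℝ} (hs : 0 < s) (hs4 : s < 4) (hc : c < 0) :
    |1 - (s - √(s ^ 2 + 4 * c)) / 2| < 1 := by
  have hlt : √(s ^ 2 + 4 * c) < s := (Real.sqrt_lt' hs).mpr (by linarith)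
  have hnonneg : 0 ≤ √(s ^ 2 + 4 * c) := Real.sqrt_nonneg _
  rw [abs_lt]
  constructor <;> linarith

lemma one_lt_abs_one_sub_half_sub_sqrt {s c : ℝ} (hc : 0 < c) :
    1 < |1 - (s - √(s ^ 2 + 4 * c)) / 2| := by
  have hlt : |s| < √(s ^ 2 + 4 * c) := by
    rw [← Real.sqrt_sq_eq_abs]
    exact Real.sqrt_lt_sqrt (sq_nonneg s) (by linarith)
  have hs : s < √(s ^ 2 + 4 * c) := (le_abs_self s).trans_lt hlt
  rw [abs_of_pos (by linarith)]
  linarith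

/-- If `qx ≥ a + b` then `q x (a + bq) ≥ (a + b)(a + bq) > q a b`. -/
lemma add_sub_mul_pos_of_mul_le {a b q x : ℝ} (ha : 0 < a) (hb : 0 < b) (hq : 0 ≤ q)
    (h : x * (a + b * q) ≤ a * b) : 0 < a + b - q * x := by
  by_contra! hs
  have hbq : 0 ≤ b * q := mul_nonneg hb.le hq
  nlinarith [mul_le_mul_of_nonneg_left h hq, mul_le_mul_of_nonneg_right hs (by linarith : 0 ≤ a + b * q),
    mul_pos ha hb, mul_nonneg hb.le hbq]

end SEIR

open SEIR in
theorem stmt_9_general (a b β q α : ℝ) (ha : 0 < a) (ha1 : a ≤ 1) (hb : 0 < b) (hb1 : b ≤ 1)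
    (hβ : 0 < β) (hq : 0 ≤ q)
    (hα : α ∈ Set.Icc (0:ℝ) 1) :
    (α = a * b / (β * (a + b * q)) →
      |1 - (a + b - q * α * β -
        Real.sqrt ((b - a + q * α * β) ^ 2 + 4 * a * α * β)) / 2| = 1) ∧
    (α < a * b / (β * (a + b * q)) →
      |1 - (a + b - q * α * β -
        Real.sqrt ((b - a + q * α * β) ^ 2 + 4 * a * α * β)) / 2| < 1) ∧
    (α > a * b / (β * (a + b * q)) →
      |1 - (a + b - q * α * β -
        Real.sqrt ((b - a + q * α * β) ^ 2 + 4 * a * α * β)) / 2| > 1) := by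
  have hden : 0 < β * (a + b * q) := by positivity
  have hD : (b - a + q * α * β) ^ 2 + 4 * a * α * β =
      (a + b - q * α * β) ^ 2 + 4 * (α * β * (a + b * q) - a * b) := by ring
  have hqαβ : 0 ≤ q * α * β := by have := hα.1; positivity
  have hrw : q * α * β = q * (α * β) := mul_assoc q α β
  rw [hD]
  refine ⟨fun h => ?_, fun h => ?_, fun h => ?_⟩
  · have hc : α * β * (a + b * q) - a * b = 0 := by
      rw [eq_div_iff hden.ne'] at h; linarith
    rw [hc, mul_zero, add_zero]
    refine abs_one_sub_half_sub_sqrt_sq (le_of_lt ?_)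
    rw [hrw]; exact add_sub_mul_pos_of_mul_le ha hb hq (by linarith)
  · have hc : α * β * (a + b * q) - a * b < 0 := by
      rw [lt_div_iff₀ hden] at h; linarith
    refine abs_one_sub_half_sub_sqrt_lt_one ?_ (by linarith) hc
    rw [hrw]; exact add_sub_mul_pos_of_mul_le ha hb hq (by linarith)
  · have hc : 0 < α * β * (a + b * q) - a * b := by
      rw [gt_iff_lt, div_lt_iff₀ hden] at h; linarith
    exact one_lt_abs_one_sub_half_sub_sqrt hc

theorem stmt_9 (a b β q α : ℝ) (ha : 0 < a) (ha1 : a ≤ 1) (hb : 0 < b) (hb1 : b ≤ 1)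
    (hβ : 0 < β) (hβ1 : β ≤ 1) (hq : 0 ≤ q) (hβq : β * q ≤ 1)
    (hα : α ∈ Set.Icc (0:ℝ) 1) :
    (α = a * b / (β * (a + b * q)) →
      |1 - (a + b - q * α * β -
        Real.sqrt ((b - a + q * α * β) ^ 2 + 4 * a * α * β)) / 2| = 1) ∧
    (α < a * b / (β * (a + b * q)) →
      |1 - (a + b - q * α * β -
        Real.sqrt ((b - a + q * α * β) ^ 2 + 4 * a * α * β)) / 2| < 1) ∧
    (α > a * b / (β * (a + b * q)) →
      |1 - (a + b - q * α * β -
        Real.sqrt ((b - a + q * α * β) ^ 2 + 4 * a * α * β)) / 2| > 1) :=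
  stmt_9_general a b β q α ha ha1 hb hb1 hβ hq hα
end
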